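/- arXiv:2208.10932 — 2 statements merged into one kernel-verified Lean document; each statement's English description precedes it below -/
import Mathlib

section
/- For the argumentation framework Γ = ⟨{a,b,c}, {(a,b),(b,c)}⟩ with independent argument probabilities ρ(a)=p, ρ(b)=q, ρ(c)=r ∈ [0,1], the distribution-semantics grounded probability of c, PROB(c, GR, Γ) = p·(1−q)·r, differs in general from the constellation probability PROB-C^IND(c, GR, Γ) = p·q·r + p·(1−q)·r + (1−p)·(1−q)·r; in particular there exist p,q,r ∈ [0,1] for which the two values are distinct. -/
/-! In the chain a → b → c the argument a is unattacked, so it defeats b and defends c: the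
unique grounded extension is {a, c}, and PROB(c) is the single weight ρ({a, c}). In an induced
subgraph, c is grounded exactly when c is present and, if b is present, a is present to defend
it; the subgraphs {c}, {a, c}, {a, b, c} give the three constellation terms. At p = q = r = 1
the two values are 0 and 1. -/

open Finset

/-- attack relation of Γ = ⟨{a,b,c}, {(a,b),(b,c)}⟩ with a=0, b=1, c=2 -/
def R3 (x y : Fin 3) : Prop := (x = 0 ∧ y = 1) ∨ (x = 1 ∧ y = 2)

def conflictFree {α : Type*} (R : α → α → Prop) (S : Set α) : Prop :=
  ∀ a ∈ S, ∀ b ∈ S, ¬ R a b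

def complete {α : Type*} (R : α → α → Prop) (S : Set α) : Prop :=
  conflictFree R S ∧ S = {a | ∀ b, R b a → ∃ c ∈ S, R c b}

def grounded {α : Type*} (R : α → α → Prop) (S : Set α) : Prop :=
  complete R S ∧ ∀ T, complete R T → S ⊆ T

/-- restriction of `R` to the induced subgraph on `A'` -/
def restr {α : Type*} (R : α → α → Prop) (A' : Set α) (x y : α) : Prop :=
  R x y ∧ x ∈ A' ∧ y ∈ A'

/-- the grounded extension of the subgraph of `R` induced by `A'` -/
def groundedIn {α : Type*} (R : α → α → Prop) (A' : Set α) (S : Set α) : Prop :=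
  S ⊆ A' ∧ conflictFree (restr R A') S ∧
  S = {a | a ∈ A' ∧ ∀ b, restr R A' b a → ∃ c ∈ S, restr R A' c b} ∧
  ∀ T ⊆ A', (conflictFree (restr R A') T ∧
      T = {a | a ∈ A' ∧ ∀ b, restr R A' b a → ∃ c ∈ T, restr R A' c b}) → S ⊆ T

/-- weight of a set of arguments under independent labelling ρ -/
noncomputable def wt {α : Type*} [Fintype α] [DecidableEq α] (ρ : α → ℝ) (S : Finset α) : ℝ :=
  (∏ a ∈ S, ρ a) * ∏ a ∈ Sᶜ, (1 - ρ a)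

open Classical in
/-- distribution-semantics grounded probability of argument `x` -/
noncomputable def PROBgr {α : Type*} [Fintype α] [DecidableEq α] (R : α → α → Prop) (ρ : α → ℝ) (x : α) : ℝ :=
  ∑ S ∈ Finset.univ.powerset.filter (fun S : Finset α => grounded R (↑S : Set α) ∧ x ∈ S), wt ρ S

open Classical in
/-- constellation grounded probability of argument `x` under independence -/
noncomputable def PROBCgr {α : Type*} [Fintype α] [DecidableEq α] (R : α → α → Prop) (ρ : α → ℝ) (x : α) : ℝ :=
  ∑ A' ∈ Finset.univ.powerset.filter
      (fun A' : Finset α => ∃ E : Set α, groundedIn R (↑A' : Set α) E ∧ x ∈ E), wt ρ A'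

section

variable {α : Type*} {R : α → α → Prop}

lemma restr_univ : restr R Set.univ = R := by
  ext x y
  simp [restr]

lemma groundedIn_univ_iff {S : Set α} : groundedIn R Set.univ S ↔ grounded R S := by
  simp [groundedIn, grounded, complete, restr_univ, and_assoc]

lemma groundedIn_self_of_forall_not_restr {A' : Set α} (h : ∀ x y, ¬ restr R A' x y) :
    groundedIn R A' A' := by
  refine ⟨subset_rfl, fun a _ b _ => h a b, ?_, fun T _ ⟨_, hT⟩ a ha => ?_⟩
  · ext a; simp [h]
  · rw [hT]; simp [ha, h]

lemma groundedIn.exists_defender {A' E : Set α} {x b : α} (hE : groundedIn R A' E) (hx : x ∈ E)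
    (hb : restr R A' b x) : ∃ c ∈ E, restr R A' c b := by
  rw [hE.2.2.1] at hx
  exact hx.2 b hb

end

lemma complete_R3_iff (S : Set (Fin 3)) : complete R3 S ↔ S = {0, 2} := by
  constructor
  · rintro ⟨-, hS⟩
    simp [Set.ext_iff, R3, Fin.forall_fin_succ] at hS
    ext x
    fin_cases x <;> simp [hS]
  · rintro rfl
    simp [complete, conflictFree, R3, Set.ext_iff, Fin.forall_fin_succ]

lemma grounded_R3_iff (S : Set (Fin 3)) : grounded R3 S ↔ S = {0, 2} := by
  simp only [grounded, complete_R3_iff]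
  constructor
  · exact And.left
  · rintro rfl
    exact ⟨rfl, fun T hT => hT.ge⟩

lemma exists_groundedIn_R3_mem_two_iff (A' : Finset (Fin 3)) :
    (∃ E, groundedIn R3 ↑A' E ∧ 2 ∈ E) ↔ 2 ∈ A' ∧ (1 ∈ A' → 0 ∈ A') := by
  constructor
  · rintro ⟨E, hE, h2⟩
    have h2A : 2 ∈ A' := hE.1 h2
    refine ⟨h2A, fun h1A => ?_⟩
    obtain ⟨c, -, hc, hcA, -⟩ := hE.exists_defender h2 ⟨Or.inr ⟨rfl, rfl⟩, h1A, h2A⟩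
    obtain rfl : c = 0 := by simpa [R3] using hc
    exact hcA
  · rintro ⟨h2A, h10⟩
    by_cases h1A : 1 ∈ A'
    · have hA : (↑A' : Set (Fin 3)) = Set.univ := by
        ext x; fin_cases x <;> simp [h10 h1A, h1A, h2A]
      exact ⟨{0, 2}, by rw [hA, groundedIn_univ_iff, grounded_R3_iff], by simp⟩
    · refine ⟨A', groundedIn_self_of_forall_not_restr ?_, h2A⟩
      rintro x y ⟨hxy | hxy, hx, hy⟩
      · exact h1A (hxy.2 ▸ hy)
      · exact h1A (hxy.1 ▸ hx)

lemma wt_eq_prod_ite {α : Type*} [Fintype α] [DecidableEq α] (ρ : α → ℝ) (S : Finset α) :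
    wt ρ S = ∏ a, if a ∈ S then ρ a else 1 - ρ a := by
  rw [Finset.prod_ite, wt, Finset.filter_mem_eq_inter, Finset.univ_inter,
    Finset.compl_eq_univ_sdiff, Finset.filter_notMem_eq_sdiff]

lemma PROBgr_R3 (ρ : Fin 3 → ℝ) : PROBgr R3 ρ 2 = ρ 0 * (1 - ρ 1) * ρ 2 := by
  have h : ∀ S : Finset (Fin 3), grounded R3 ↑S ∧ 2 ∈ S ↔ S = {0, 2} := by
    intro S
    rw [grounded_R3_iff, ← Finset.coe_pair, Finset.coe_inj]
    constructor
    · exact And.left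
    · rintro rfl; simp
  simp [PROBgr, h, Finset.filter_eq', wt_eq_prod_ite, Fin.prod_univ_three]

lemma PROBCgr_R3 (ρ : Fin 3 → ℝ) : PROBCgr R3 ρ 2 =
    ρ 0 * ρ 1 * ρ 2 + ρ 0 * (1 - ρ 1) * ρ 2 + (1 - ρ 0) * (1 - ρ 1) * ρ 2 := by
  have h : Finset.univ.powerset.filter (fun A' : Finset (Fin 3) => 2 ∈ A' ∧ (1 ∈ A' → 0 ∈ A'))
      = {Finset.univ, {0, 2}, {2}} := by decide
  simp only [PROBCgr, exists_groundedIn_R3_mem_two_iff]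
  rw [h, Finset.sum_insert (by decide), Finset.sum_pair (by decide)]
  simp [wt_eq_prod_ite, Fin.prod_univ_three]
  ring

theorem stmt_1 :
    (∀ p q r : ℝ, p ∈ Set.Icc (0:ℝ) 1 → q ∈ Set.Icc (0:ℝ) 1 → r ∈ Set.Icc (0:ℝ) 1 →
      PROBgr R3 (fun x => if x = 0 then p else if x = 1 then q else r) 2
        = p * (1 - q) * r ∧
      PROBCgr R3 (fun x => if x = 0 then p else if x = 1 then q else r) 2
        = p * q * r + p * (1 - q) * r + (1 - p) * (1 - q) * r) ∧
    (∃ p q r : ℝ, p ∈ Set.Icc (0:ℝ) 1 ∧ q ∈ Set.Icc (0:ℝ) 1 ∧ r ∈ Set.Icc (0:ℝ) 1 ∧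
      PROBgr R3 (fun x => if x = 0 then p else if x = 1 then q else r) 2
        ≠ PROBCgr R3 (fun x => if x = 0 then p else if x = 1 then q else r) 2) := by
  refine ⟨fun p q r _ _ _ => ?_, 1, 1, 1, by norm_num, by norm_num, by norm_num, ?_⟩
  · simp [PROBgr_R3, PROBCgr_R3]
  · simp [PROBgr_R3, PROBCgr_R3]
end

section
/- For a finite argumentation framework Γ = ⟨A,R⟩, a set S ⊆ A is an admissible set of Γ if and only if the assignment mapping each argument a to 'true iff a ∈ S' satisfies the propositional formula ⋀_{a∈A} ( (a ⊃ ⋀_{b attacks a} ¬b) ∧ (a ⊃ ⋀_{b attacks a} ⋁_{c attacks b} c) ). -/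
def acceptable {α : Type*} (R : α → α → Prop) (S : Set α) (a : α) : Prop :=
  ∀ b, R b a → ∃ c ∈ S, R c b

def admissible {α : Type*} (R : α → α → Prop) (S : Set α) : Prop :=
  conflictFree R S ∧ ∀ a ∈ S, acceptable R S a

/-- satisfaction, by the assignment `a ↦ a ∈ S`, of the Besnard–Doutre formula
  ⋀_{a∈A} ((a ⊃ ⋀_{b attacks a} ¬b) ∧ (a ⊃ ⋀_{b attacks a} ⋁_{c attacks b} c)) -/
def satisfiesAdmFormula {α : Type*} (R : α → α → Prop) (S : Set α) : Prop :=
  ∀ a, (a ∈ S → ∀ b, R b a → b ∉ S) ∧ (a ∈ S → ∀ b, R b a → ∃ c, R c b ∧ c ∈ S)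

section

variable {α : Type*} {R : α → α → Prop} {S : Set α}

theorem conflictFree_iff_forall_attacker_not_mem :
    conflictFree R S ↔ ∀ a ∈ S, ∀ b, R b a → b ∉ S :=
  ⟨fun h a ha b hba hb => h b hb a ha hba, fun h a ha b hb hab => h b hb a hab ha⟩

theorem acceptable_iff_forall_attacker_attacked {a : α} :
    acceptable R S a ↔ ∀ b, R b a → ∃ c, R c b ∧ c ∈ S := by
  simp only [acceptable, and_comm]

end

theorem stmt_4_general {α : Type*} (R : α → α → Prop) (S : Set α) :
    admissible R S ↔ satisfiesAdmFormula R S := by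
  simp only [admissible, satisfiesAdmFormula, forall_and, conflictFree_iff_forall_attacker_not_mem,
    acceptable_iff_forall_attacker_attacked]

theorem stmt_4 {α : Type*} [Fintype α] (R : α → α → Prop) (S : Set α) :
    admissible R S ↔ satisfiesAdmFormula R S :=
  stmt_4_general R S
end
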